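/- arXiv:1308.0476 — 6 statements merged into one kernel-verified Lean document; each statement's English description precedes it below -/
import Mathlib

section
/- For a classical n→1 random access code with n ≥ 3 assisted by two shared random bits, the worst-case success probability P_min = min over inputs x ∈ {0,1}^n and indices i of the probability of correctly guessing x_i is at most 1/2. -/
/-- A classical `n → 1` RAC with `n ≥ 3` assisted by two shared random bits
has worst-case success probability at most `1/2`: there exist an input `x` and an index `i`
whose success probability is at most `1/2`. -/
theorem stmt_2 (n : ℕ) (hn : 3 ≤ n) (c : (Fin n → Bool) → Bool → Bool)
    (b : Bool → Bool → Fin n → Bool)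
    (p : Bool × Bool → ℝ) (hp : ∀ r, 0 ≤ p r) (hsum : ∑ r : Bool × Bool, p r = 1) :
    ∃ (x : Fin n → Bool) (i : Fin n),
      (∑ r : Bool × Bool, p r * (if b (c x r.1) r.2 i = x i then 1 else 0)) ≤ 1/2 := by
  have hcard : Fintype.card (Bool → Bool) < Fintype.card (Fin n → Bool) := by
    simp only [Fintype.card_fun, Fintype.card_bool, Fintype.card_fin]
    have h2 : (2:ℕ)^2 < 2^n := Nat.pow_lt_pow_right (by norm_num) (by omega)
    simpa using h2
  obtain ⟨x, y, hxy, hF⟩ :=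
    Fintype.exists_ne_map_eq_of_card_lt (fun x : Fin n → Bool => c x) hcard
  obtain ⟨i, hi⟩ := Function.ne_iff.mp hxy
  have hkey : (∑ r : Bool × Bool, p r * (if b (c x r.1) r.2 i = x i then 1 else 0))
      + (∑ r : Bool × Bool, p r * (if b (c y r.1) r.2 i = y i then 1 else 0)) = 1 := by
    have hterm : ∀ r ∈ (Finset.univ : Finset (Bool × Bool)),
        p r * (if b (c x r.1) r.2 i = x i then (1:ℝ) else 0)
          + p r * (if b (c y r.1) r.2 i = y i then 1 else 0) = p r := by
      intro r _
      have hc : c x r.1 = c y r.1 := congrFun hF r.1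
      rw [hc]
      rcases eq_or_ne (b (c y r.1) r.2 i) (x i) with h | h
      · rw [if_pos h, if_neg (by rw [h]; exact hi)]; ring
      · have hy : b (c y r.1) r.2 i = y i := by
          revert h hi; cases x i <;> cases y i <;> cases b (c y r.1) r.2 i <;> simp
        rw [if_neg h, if_pos hy]; ring
    rw [← Finset.sum_add_distrib, Finset.sum_congr rfl hterm, hsum]
  by_cases h : (∑ r : Bool × Bool, p r * (if b (c x r.1) r.2 i = x i then 1 else 0)) ≤ 1/2
  · exact ⟨x, i, h⟩
  · exact ⟨y, i, by linarith⟩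
end

section
/- For the 2→1 quantum code assisted by a Bell diagonal state with E_3 = 0, using Alice's measurement direction proportional to ((-1)^{x_1}/E_1, (-1)^{x_2}/E_2, 0), the worst-case success probability is ½(1 + 1/√(E_1^{-2} + E_2^{-2})). -/
/-- The 2→1 quantum RAC assisted by a Bell diagonal state with `E₃ = 0` and
`E₁, E₂ ≠ 0`. Alice measures along the unit vector proportional to
`((-1)^{x₁}/E₁, (-1)^{x₂}/E₂, 0)`; the success probability of guessing bit `i ∈ {1,2}` is
`½(1 + |E_i α̂_i(x)|)`. It equals `½(1 + 1/√(E₁⁻² + E₂⁻²))` for every `x` and `i`, which is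
therefore the worst-case success probability. -/
theorem stmt_7 (E1 E2 : ℝ) (hE1 : E1 ≠ 0) (hE2 : E2 ≠ 0)
    (E : Fin 3 → ℝ) (hE : E 0 = E1 ∧ E 1 = E2 ∧ E 2 = 0)
    (αvec : (Fin 2 → Bool) → Fin 3 → ℝ)
    (hα : ∀ x, αvec x 0 = (if x 0 then -1 else 1) / E1 ∧
               αvec x 1 = (if x 1 then -1 else 1) / E2 ∧ αvec x 2 = 0)
    (αhat : (Fin 2 → Bool) → Fin 3 → ℝ)
    (hαhat : ∀ x j, αhat x j = αvec x j / Real.sqrt (∑ k, (αvec x k) ^ 2))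
    (P : (Fin 2 → Bool) → Fin 2 → ℝ)
    (hP : ∀ x i, P x i = (1 + |E i.castSucc * αhat x i.castSucc|) / 2) :
    ∀ x i, P x i = (1 + 1 / Real.sqrt ((E1 ^ 2)⁻¹ + (E2 ^ 2)⁻¹)) / 2 := by
  intro x i
  obtain ⟨h0, h1, h2⟩ := hα x
  have hS : (∑ k, (αvec x k) ^ 2) = (E1 ^ 2)⁻¹ + (E2 ^ 2)⁻¹ := by
    rw [Fin.sum_univ_three, h0, h1, h2]
    rcases x 0 <;> rcases x 1 <;> simp <;> ring
  have hSpos : (0:ℝ) < (E1 ^ 2)⁻¹ + (E2 ^ 2)⁻¹ := by positivity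
  have hsq : (0:ℝ) < Real.sqrt ((E1 ^ 2)⁻¹ + (E2 ^ 2)⁻¹) := Real.sqrt_pos.mpr hSpos
  rw [hP, hαhat, hS]
  have key : ∀ c e : ℝ, e ≠ 0 → (c = 1 ∨ c = -1) →
      |e * (c / e / Real.sqrt ((E1 ^ 2)⁻¹ + (E2 ^ 2)⁻¹))|
        = 1 / Real.sqrt ((E1 ^ 2)⁻¹ + (E2 ^ 2)⁻¹) := by
    intro c e he hc
    have h : e * (c / e / Real.sqrt ((E1 ^ 2)⁻¹ + (E2 ^ 2)⁻¹))
        = c / Real.sqrt ((E1 ^ 2)⁻¹ + (E2 ^ 2)⁻¹) := by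
      field_simp
    rw [h]
    rcases hc with rfl | rfl <;>
      simp [abs_div, abs_of_pos hsq]
  fin_cases i
  · show (1 + |E 0 * (αvec x 0 / Real.sqrt ((E1 ^ 2)⁻¹ + (E2 ^ 2)⁻¹))|) / 2 = _
    rw [hE.1, h0]
    rcases x 0 <;> simp only [if_true, if_false, Bool.false_eq_true] <;>
      rw [key _ _ hE1 (by simp)]
  · show (1 + |E 1 * (αvec x 1 / Real.sqrt ((E1 ^ 2)⁻¹ + (E2 ^ 2)⁻¹))|) / 2 = _
    rw [hE.2.1, h1]
    rcases x 1 <;> simp only [if_true, if_false, Bool.false_eq_true] <;>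
      rw [key _ _ hE2 (by simp)]
end

section
/- Over all triples (E_1, E_2, E_3) with |E_1| + |E_2| + |E_3| ≤ 1, the quantity 1/√(E_1^{-2} + E_2^{-2} + E_3^{-2}) is maximized at |E_1| = |E_2| = |E_3| = 1/3, giving maximum value 1/(3√3), so the separable-state 3→1 quantum code efficiency is at most ½(1 + 1/(3√3)). -/
lemma key (E1 E2 E3 : ℝ) (h1 : E1 ≠ 0) (h2 : E2 ≠ 0) (h3 : E3 ≠ 0)
    (h : |E1| + |E2| + |E3| ≤ 1) :
    (27:ℝ) ≤ (E1 ^ 2)⁻¹ + (E2 ^ 2)⁻¹ + (E3 ^ 2)⁻¹ := by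
  set a := |E1| with ha
  set b := |E2| with hb
  set c := |E3| with hc
  have hap : 0 < a := abs_pos.mpr h1
  have hbp : 0 < b := abs_pos.mpr h2
  have hcp : 0 < c := abs_pos.mpr h3
  have e1 : (E1 ^ 2)⁻¹ = (a ^ 2)⁻¹ := by rw [ha, sq_abs]
  have e2 : (E2 ^ 2)⁻¹ = (b ^ 2)⁻¹ := by rw [hb, sq_abs]
  have e3 : (E3 ^ 2)⁻¹ = (c ^ 2)⁻¹ := by rw [hc, sq_abs]
  rw [e1, e2, e3]
  have habc : a * b * c > 0 := by positivity
  have s1 : a * b * c * (a + b + c) ≤ b^2*c^2 + a^2*c^2 + a^2*b^2 := by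
    nlinarith [sq_nonneg (a*b - b*c), sq_nonneg (a*b - a*c), sq_nonneg (b*c - a*c)]
  have s2 : 27 * (a * b * c) ≤ (a + b + c)^3 := by
    nlinarith [mul_nonneg (sq_nonneg (a-b)) hcp.le, mul_nonneg (sq_nonneg (b-c)) hap.le,
      mul_nonneg (sq_nonneg (a-c)) hbp.le]
  have hs : 0 < a + b + c := by linarith
  have s3 : (a + b + c)^3 ≤ a + b + c := by
    nlinarith [mul_nonneg (mul_nonneg (sub_nonneg.mpr h) hs.le) hs.le]
  have key2 : b^2*c^2 + a^2*c^2 + a^2*b^2 - 27 * (a*b*c)^2 ≥ 0 := by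
    nlinarith [mul_le_mul_of_nonneg_left (s2.trans s3) habc.le]
  have expand : (a ^ 2)⁻¹ + (b ^ 2)⁻¹ + (c ^ 2)⁻¹ = (b^2*c^2 + a^2*c^2 + a^2*b^2) / (a*b*c)^2 := by
    field_simp
  rw [expand]
  rw [le_div_iff₀ (by positivity)]
  linarith

lemma sqrt27 : Real.sqrt 27 = 3 * Real.sqrt 3 := by
  rw [show (27:ℝ) = 3^2 * 3 by norm_num, Real.sqrt_mul (by positivity), Real.sqrt_sq (by norm_num)]

lemma ub (E1 E2 E3 : ℝ) (h1 : E1 ≠ 0) (h2 : E2 ≠ 0) (h3 : E3 ≠ 0)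
    (h : |E1| + |E2| + |E3| ≤ 1) :
    1 / Real.sqrt ((E1 ^ 2)⁻¹ + (E2 ^ 2)⁻¹ + (E3 ^ 2)⁻¹) ≤ 1 / (3 * Real.sqrt 3) := by
  have hk := key E1 E2 E3 h1 h2 h3 h
  rw [← sqrt27]
  apply one_div_le_one_div_of_le
  · rw [show (27:ℝ) = 3^2*3 by norm_num] at *
    positivity
  · exact Real.sqrt_le_sqrt hk

/-- Over all `(E₁, E₂, E₃)` with `|E₁| + |E₂| + |E₃| ≤ 1` and all `E_i ≠ 0`,
the quantity `1/√(E₁⁻² + E₂⁻² + E₃⁻²)` is maximized at `|E₁| = |E₂| = |E₃| = 1/3` with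
maximum value `1/(3√3)`; hence the separable-state 3→1 quantum code efficiency is at most
`½(1 + 1/(3√3))`. -/
theorem stmt_9 :
    IsGreatest {y : ℝ | ∃ E1 E2 E3 : ℝ, E1 ≠ 0 ∧ E2 ≠ 0 ∧ E3 ≠ 0 ∧
        |E1| + |E2| + |E3| ≤ 1 ∧
        y = 1 / Real.sqrt ((E1 ^ 2)⁻¹ + (E2 ^ 2)⁻¹ + (E3 ^ 2)⁻¹)}
      (1 / (3 * Real.sqrt 3)) ∧
    1 / Real.sqrt ((((1:ℝ)/3) ^ 2)⁻¹ + (((1:ℝ)/3) ^ 2)⁻¹ + (((1:ℝ)/3) ^ 2)⁻¹)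
      = 1 / (3 * Real.sqrt 3) ∧
    (∀ E1 E2 E3 : ℝ, E1 ≠ 0 → E2 ≠ 0 → E3 ≠ 0 → |E1| + |E2| + |E3| ≤ 1 →
      (1 + 1 / Real.sqrt ((E1 ^ 2)⁻¹ + (E2 ^ 2)⁻¹ + (E3 ^ 2)⁻¹)) / 2
        ≤ (1 + 1 / (3 * Real.sqrt 3)) / 2) := by
  have hval : 1 / Real.sqrt ((((1:ℝ)/3) ^ 2)⁻¹ + (((1:ℝ)/3) ^ 2)⁻¹ + (((1:ℝ)/3) ^ 2)⁻¹)
      = 1 / (3 * Real.sqrt 3) := by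
    rw [show (((1:ℝ)/3) ^ 2)⁻¹ + (((1:ℝ)/3) ^ 2)⁻¹ + (((1:ℝ)/3) ^ 2)⁻¹ = 27 by norm_num, sqrt27]
  refine ⟨⟨⟨1/3, 1/3, 1/3, by norm_num, by norm_num, by norm_num, by
      rw [abs_of_pos (by norm_num : (0:ℝ) < 1/3)]; norm_num, hval.symm⟩, ?_⟩, hval, ?_⟩
  · rintro y ⟨E1, E2, E3, h1, h2, h3, h, rfl⟩
    exact ub E1 E2 E3 h1 h2 h3 h
  · intro E1 E2 E3 h1 h2 h3 h
    have := ub E1 E2 E3 h1 h2 h3 h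
    linarith
end

section
/- There exist Werner-state discord values D_Wer ∈ (1/(2√2), 1/2) such that the Werner state has strictly larger geometric discord than the optimal separable state (D_sep = 1/(2√2)) yet yields strictly smaller 2→1 RAC efficiency: ½(1 + D_Wer/√2) < ½(1 + D_sep). -/
lemma key_s13 (D : ℝ) (hD : D ∈ Set.Ioo (1 / (2 * Real.sqrt 2)) (1/2)) :
    1 / (2 * Real.sqrt 2) < D ∧
    (1 + D / Real.sqrt 2) / 2 < (1 + 1 / (2 * Real.sqrt 2)) / 2 := by
  obtain ⟨h1, h2⟩ := hD
  have hs : (0:ℝ) < Real.sqrt 2 := Real.sqrt_pos.mpr (by norm_num)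
  refine ⟨h1, ?_⟩
  have : D / Real.sqrt 2 < 1 / (2 * Real.sqrt 2) := by
    rw [div_lt_div_iff₀ hs (by positivity)]
    ring_nf
    nlinarith
  linarith

/-- There exist Werner discord values `D ∈ (1/(2√2), 1/2)` with strictly
larger geometric discord than the optimal separable state (`D_sep = 1/(2√2)`) yet strictly
smaller 2→1 RAC efficiency; indeed every `D` in this interval has this property. -/
theorem stmt_13 :
    (∃ D : ℝ, D ∈ Set.Ioo (1 / (2 * Real.sqrt 2)) (1/2) ∧
      1 / (2 * Real.sqrt 2) < D ∧
      (1 + D / Real.sqrt 2) / 2 < (1 + 1 / (2 * Real.sqrt 2)) / 2) ∧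
    (∀ D : ℝ, D ∈ Set.Ioo (1 / (2 * Real.sqrt 2)) (1/2) →
      1 / (2 * Real.sqrt 2) < D ∧
      (1 + D / Real.sqrt 2) / 2 < (1 + 1 / (2 * Real.sqrt 2)) / 2) := by
  have hmem : (0.4 : ℝ) ∈ Set.Ioo (1 / (2 * Real.sqrt 2)) (1/2) := by
    constructor
    · rw [div_lt_iff₀ (by positivity)]
      nlinarith [Real.sq_sqrt (by norm_num : (2:ℝ) ≥ 0), Real.sqrt_nonneg 2]
    · norm_num
  exact ⟨⟨0.4, hmem, key_s13 _ hmem⟩, fun D h => key_s13 D h⟩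
end

section
/- The concatenated 2^m → 1 quantum code assisted by Werner states with parameter q has worst-case success probability P_min = ½(1 + (q/√2)^m), which exceeds ½ for all q > 0 and all m ≥ 1. -/
/-- The concatenated `2^m → 1` quantum code assisted by Werner states with
parameter `q` has base efficiency `p 1 = ½(1 + q/√2)` and biases multiply under
concatenation (`2·p (m+1) − 1 = (2·p m − 1)(2·p 1 − 1)`); therefore
`p m = ½(1 + (q/√2)^m)`, which exceeds `½` for all `q > 0` and `m ≥ 1`. -/
theorem stmt_14 (q : ℝ) (hq : 0 < q) (p : ℕ → ℝ)
    (hp1 : p 1 = (1 + q / Real.sqrt 2) / 2)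
    (hrec : ∀ m, 1 ≤ m → 2 * p (m + 1) - 1 = (2 * p m - 1) * (2 * p 1 - 1)) :
    ∀ m, 1 ≤ m → p m = (1 + (q / Real.sqrt 2) ^ m) / 2 ∧ p m > 1/2 := by
  have hqs : 0 < q / Real.sqrt 2 := div_pos hq (Real.sqrt_pos.mpr two_pos)
  have key : ∀ m, 1 ≤ m → p m = (1 + (q / Real.sqrt 2) ^ m) / 2 := by
    intro m hm
    induction m with
    | zero => omega
    | succ n ih =>
      rcases Nat.eq_or_lt_of_le hm with h | h
      · rw [show n = 0 by omega]
        simpa using hp1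
      · have hn : 1 ≤ n := by omega
        have h1 := hrec n hn
        rw [ih hn, hp1] at h1
        have : p (n + 1) = (1 + (q / Real.sqrt 2) ^ n * (q / Real.sqrt 2)) / 2 := by
          nlinarith [h1]
        rw [this, pow_succ]
  intro m hm
  refine ⟨key m hm, ?_⟩
  rw [key m hm]
  have := pow_pos hqs m
  linarith
end

section
/- For Bell diagonal states ρ = ¼(1⊗1 + Σ E_l σ_l⊗σ_l) with E_1² ≥ E_2² ≥ E_3², the normalized geometric discord satisfies D²_{a|b} = ½(E_2² + E_3²); in particular for Werner states (all |E_i| = q), D_{a|b} = q. -/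
open Matrix Kronecker Complex
open scoped ComplexOrder

noncomputable section

/-- The Pauli matrices `σ₁, σ₂, σ₃`. -/
def pauli : Fin 3 → Matrix (Fin 2) (Fin 2) ℂ
  | 0 => !![0, 1; 1, 0]
  | 1 => !![0, -I; I, 0]
  | 2 => !![1, 0; 0, -1]

/-- The projector `|k⟩⟨k|` on Bob's qubit. -/
def ketbra (k : Fin 2) : Matrix (Fin 2) (Fin 2) ℂ :=
  Matrix.of fun i j => if i = k ∧ j = k then 1 else 0

/-- The set of values `Tr (ρ − σ)²` over zero-discord states
`σ = Σ_k p_k ρ_k ⊗ |k⟩⟨k|` (with `ρ_k` density matrices on Alice's side, in Bob's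
eigenbasis `|k⟩`, allowing an arbitrary local basis rotation `U` on Bob). -/
def discordDistances (ρ : Matrix (Fin 2 × Fin 2) (Fin 2 × Fin 2) ℂ) : Set ℝ :=
  {d : ℝ | ∃ (p : Fin 2 → ℝ) (ρs : Fin 2 → Matrix (Fin 2) (Fin 2) ℂ)
      (U : Matrix (Fin 2) (Fin 2) ℂ), U ∈ Matrix.unitaryGroup (Fin 2) ℂ ∧
      (∀ k, 0 ≤ p k) ∧ (∑ k, p k) = 1 ∧
      (∀ k, (ρs k).PosSemidef ∧ (ρs k).trace = 1) ∧
      d = (((ρ - ∑ k, (p k : ℂ) •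
        (ρs k ⊗ₖ (U * ketbra k * star U))) ^ 2).trace).re}


/-! Write Alice's states and Bob's rotated projectors in Bloch form, `ρ_k = ½(1 + a_k·σ)` and
`U|k⟩⟨k|U* = ½(1 ± n·σ)` with `|n| = 1`. Orthogonality of the Pauli products turns `Tr (ρ - σ)²`
into `¼(|p₀a₀ + p₁a₁|² + (p₀ - p₁)² + Σ_ij (E_i δ_ij - c_i n_j)²)` with `c = p₀a₀ - p₁a₁`, and
`Σ_ij (E_i δ_ij - c_i n_j)² = Σ_l (c_l - E_l n_l)² + Σ_l E_l² (1 - n_l²) ≥ Σ_l E_l² - max_l E_l²`.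
Equality holds for `p = (½, ½)`, `n` the axis of the largest `|E_l|` and `a_0 = -a_1 = E_l n`. -/

def blochMatrix (r : Fin 3 → ℝ) : Matrix (Fin 2) (Fin 2) ℂ :=
  (1 / 2 : ℂ) • (1 + ∑ l, (r l : ℂ) • pauli l)

lemma blochMatrix_eq (r : Fin 3 → ℝ) :
    blochMatrix r = !![(1 + (r 2 : ℂ)) / 2, ((r 0 : ℂ) - r 1 * I) / 2;
      ((r 0 : ℂ) + r 1 * I) / 2, (1 - (r 2 : ℂ)) / 2] := by
  ext i j
  fin_cases i <;> fin_cases j <;>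
    simp [blochMatrix, pauli, Fin.sum_univ_three] <;> ring

lemma trace_blochMatrix (r : Fin 3 → ℝ) : (blochMatrix r).trace = 1 := by
  rw [blochMatrix_eq, Matrix.trace_fin_two_of]
  ring

lemma one_sub_blochMatrix (r : Fin 3 → ℝ) : 1 - blochMatrix r = blochMatrix (-r) := by
  ext i j
  fin_cases i <;> fin_cases j <;> simp [blochMatrix_eq] <;> ring

lemma exists_blochMatrix_eq {A : Matrix (Fin 2) (Fin 2) ℂ} (hA : A.IsHermitian)
    (htr : A.trace = 1) : ∃ r, A = blochMatrix r := by
  refine ⟨![2 * (A 0 1).re, -2 * (A 0 1).im, 2 * (A 0 0).re - 1], ?_⟩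
  have h10 : A 1 0 = star (A 0 1) := by simpa using (congr_fun (congr_fun hA 1) 0).symm
  have h00 : (A 0 0).im = 0 := by
    have := congrArg Complex.im (congr_fun (congr_fun hA 0) 0)
    simp only [Matrix.conjTranspose_apply, star_def, conj_im] at this
    linarith
  have h11 : A 1 1 = 1 - A 0 0 := by
    rw [← htr]; simp [Matrix.trace, Fin.sum_univ_two]
  ext i j
  fin_cases i <;> fin_cases j <;>
    simp [blochMatrix_eq, Complex.ext_iff, h00, h10, h11] <;> ring

lemma sum_sq_eq_one_of_blochMatrix_mul_self {r : Fin 3 → ℝ}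
    (h : blochMatrix r * blochMatrix r = blochMatrix r) : ∑ l, r l ^ 2 = 1 := by
  rw [Fin.sum_univ_three]
  have h00 := congrArg Complex.re (congr_fun (congr_fun h 0) 0)
  simp [blochMatrix_eq, Matrix.mul_apply, Fin.sum_univ_two] at h00
  nlinarith [h00]

lemma blochMatrix_posSemidef {r : Fin 3 → ℝ} (hr : ∑ l, r l ^ 2 ≤ 1) :
    (blochMatrix r).PosSemidef := by
  rw [Fin.sum_univ_three] at hr
  rw [Matrix.posSemidef_iff_dotProduct_mulVec]
  refine ⟨?_, fun x => ?_⟩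
  · ext i j; fin_cases i <;> fin_cases j <;> simp [blochMatrix_eq, Complex.ext_iff]
  · refine Complex.le_def.2 ⟨?_, ?_⟩
    · simp [blochMatrix_eq, dotProduct, Matrix.mulVec, Fin.sum_univ_two]
      -- four times the quadratic form is the sum of these four squares and `(1 - |r|²) |x|²`
      nlinarith [sq_nonneg ((1 + r 2) * (x 0).re + r 0 * (x 1).re + r 1 * (x 1).im),
        sq_nonneg ((1 + r 2) * (x 0).im + r 0 * (x 1).im - r 1 * (x 1).re),
        sq_nonneg ((1 - r 2) * (x 1).re + r 0 * (x 0).re - r 1 * (x 0).im),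
        sq_nonneg ((1 - r 2) * (x 1).im + r 0 * (x 0).im + r 1 * (x 0).re),
        mul_nonneg (sub_nonneg.2 hr)
          (by positivity : 0 ≤ (x 0).re ^ 2 + (x 0).im ^ 2 + (x 1).re ^ 2 + (x 1).im ^ 2)]
    · simp [blochMatrix_eq, dotProduct, Matrix.mulVec, Fin.sum_univ_two]
      ring

lemma ketbra_isHermitian (k : Fin 2) : (ketbra k).IsHermitian := by
  ext i j; fin_cases k <;> fin_cases i <;> fin_cases j <;> simp [ketbra]

lemma ketbra_mul_self (k : Fin 2) : ketbra k * ketbra k = ketbra k := by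
  ext i j; fin_cases k <;> fin_cases i <;> fin_cases j <;>
    simp [ketbra, Matrix.mul_apply]

lemma trace_ketbra (k : Fin 2) : (ketbra k).trace = 1 := by
  fin_cases k <;> simp [ketbra, Matrix.trace]

lemma ketbra_one : ketbra 1 = 1 - ketbra 0 := by
  ext i j; fin_cases i <;> fin_cases j <;> simp [ketbra]

lemma conj_ketbra_one {U : Matrix (Fin 2) (Fin 2) ℂ} (hU : U ∈ Matrix.unitaryGroup (Fin 2) ℂ) :
    U * ketbra 1 * star U = 1 - U * ketbra 0 * star U := by
  rw [ketbra_one, Matrix.mul_sub, Matrix.sub_mul, Matrix.mul_one, hU.2]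

lemma exists_blochMatrix_eq_conj_ketbra {U : Matrix (Fin 2) (Fin 2) ℂ}
    (hU : U ∈ Matrix.unitaryGroup (Fin 2) ℂ) :
    ∃ n : Fin 3 → ℝ, ∑ l, n l ^ 2 = 1 ∧
      U * ketbra 0 * star U = blochMatrix n ∧ U * ketbra 1 * star U = blochMatrix (-n) := by
  have hUU : star U * U = 1 := hU.1
  set P := U * ketbra 0 * star U with hP
  have hherm : P.IsHermitian := isHermitian_mul_mul_conjTranspose U (ketbra_isHermitian 0)
  have htr : P.trace = 1 := by
    rw [hP, Matrix.trace_mul_cycle, hUU, Matrix.one_mul, trace_ketbra]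
  have hidem : P * P = P := by
    calc P * P = U * ketbra 0 * (star U * U) * ketbra 0 * star U := by
          simp only [hP, Matrix.mul_assoc]
      _ = P := by rw [hUU, Matrix.mul_one, Matrix.mul_assoc U, ketbra_mul_self]
  obtain ⟨n, hn⟩ := exists_blochMatrix_eq hherm htr
  refine ⟨n, sum_sq_eq_one_of_blochMatrix_mul_self (hn ▸ hidem), hn, ?_⟩
  rw [conj_ketbra_one hU, ← hP, hn, one_sub_blochMatrix]

def bellDiagonal (E : Fin 3 → ℝ) : Matrix (Fin 2 × Fin 2) (Fin 2 × Fin 2) ℂ :=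
  (1 / 4 : ℂ) • (1 + ∑ l, (E l : ℂ) • (pauli l ⊗ₖ pauli l))

lemma trace_sq_eq_sum {m R : Type*} [Fintype m] [DecidableEq m] [Semiring R]
    (A : Matrix m m R) :
    (A ^ 2).trace = ∑ i, ∑ j, A i j * A j i := by
  simp [Matrix.trace, pow_two, Matrix.mul_apply]

/- The products `σ_μ ⊗ σ_ν` (with `σ_0 = 1`) are orthogonal with `Tr (σ_μ ⊗ σ_ν)² = 4`, so the
trace of the square of `¼ Σ x_μν σ_μ ⊗ σ_ν` is `¼ Σ x_μν²`; here `x_00 = 0`, `x_l0 = -(p₀ a + p₁ b)_l`,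
`x_0l = -(p₀ - p₁) n_l` and `x_ij = E_i δ_ij - (p₀ a - p₁ b)_i n_j`. -/
lemma re_trace_sq_bellDiagonal_sub (E a b n : Fin 3 → ℝ) {p₀ p₁ : ℝ} (hp : p₀ + p₁ = 1) :
    (((bellDiagonal E - ((p₀ : ℂ) • (blochMatrix a ⊗ₖ blochMatrix n)
        + (p₁ : ℂ) • (blochMatrix b ⊗ₖ blochMatrix (-n)))) ^ 2).trace).re
      = (∑ l, (p₀ * a l + p₁ * b l) ^ 2 + (p₀ - p₁) ^ 2 * ∑ l, n l ^ 2 + ∑ l, E l ^ 2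
          - 2 * ∑ l, E l * (p₀ * a l - p₁ * b l) * n l
          + (∑ l, (p₀ * a l - p₁ * b l) ^ 2) * ∑ l, n l ^ 2) / 4 := by
  obtain rfl : p₁ = 1 - p₀ := by linarith
  rw [trace_sq_eq_sum]
  simp only [bellDiagonal, blochMatrix_eq, Fintype.sum_prod_type, Fin.sum_univ_two,
    Fin.sum_univ_three, Matrix.sub_apply, Matrix.add_apply, Matrix.smul_apply, Matrix.one_apply,
    Matrix.kroneckerMap_apply, pauli, smul_eq_mul, Prod.mk.injEq, Pi.neg_apply]
  norm_num [Complex.ext_iff, Complex.add_re, Complex.add_im, Complex.mul_re, Complex.mul_im]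
  ring

lemma sq_add_sq_le_sum_sq_sub_two_mul_add {E : Fin 3 → ℝ} (h01 : E 1 ^ 2 ≤ E 0 ^ 2)
    (h02 : E 2 ^ 2 ≤ E 0 ^ 2) (c : Fin 3 → ℝ) {n : Fin 3 → ℝ} (hn : ∑ l, n l ^ 2 = 1) :
    E 1 ^ 2 + E 2 ^ 2 ≤ ∑ l, E l ^ 2 - 2 * ∑ l, E l * c l * n l + ∑ l, c l ^ 2 := by
  simp only [Fin.sum_univ_three] at hn ⊢
  nlinarith [sq_nonneg (c 0 - E 0 * n 0), sq_nonneg (c 1 - E 1 * n 1),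
    sq_nonneg (c 2 - E 2 * n 2), mul_le_mul_of_nonneg_right h01 (sq_nonneg (n 1)),
    mul_le_mul_of_nonneg_right h02 (sq_nonneg (n 2))]

lemma le_of_mem_discordDistances_bellDiagonal {E : Fin 3 → ℝ} (h01 : E 1 ^ 2 ≤ E 0 ^ 2)
    (h02 : E 2 ^ 2 ≤ E 0 ^ 2) {d : ℝ} (hd : d ∈ discordDistances (bellDiagonal E)) :
    (E 1 ^ 2 + E 2 ^ 2) / 4 ≤ d := by
  obtain ⟨p, ρs, U, hU, -, hp, hρs, rfl⟩ := hd
  obtain ⟨n, hn, hU₀, hU₁⟩ := exists_blochMatrix_eq_conj_ketbra hU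
  obtain ⟨a, ha⟩ := exists_blochMatrix_eq (hρs 0).1.1 (hρs 0).2
  obtain ⟨b, hb⟩ := exists_blochMatrix_eq (hρs 1).1.1 (hρs 1).2
  rw [Fin.sum_univ_two] at hp ⊢
  rw [hU₀, hU₁, ha, hb, re_trace_sq_bellDiagonal_sub E a b n hp, hn, mul_one, mul_one]
  have key := sq_add_sq_le_sum_sq_sub_two_mul_add h01 h02 (fun l => p 0 * a l - p 1 * b l) hn
  have hsq : 0 ≤ ∑ l, (p 0 * a l + p 1 * b l) ^ 2 := by positivity
  linarith [sq_nonneg (p 0 - p 1)]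

def hadamardGate : Matrix (Fin 2) (Fin 2) ℂ := (Real.sqrt 2 : ℂ)⁻¹ • !![1, 1; 1, -1]

lemma inv_sqrt_two_sq : (Real.sqrt 2 : ℂ)⁻¹ ^ 2 = 1 / 2 := by
  rw [inv_pow, ← Complex.ofReal_pow, Real.sq_sqrt zero_le_two]
  norm_num

lemma star_hadamardGate : star hadamardGate = hadamardGate := by
  ext i j; fin_cases i <;> fin_cases j <;> simp [hadamardGate]

lemma hadamardGate_mem_unitaryGroup : hadamardGate ∈ Matrix.unitaryGroup (Fin 2) ℂ := by
  have h : hadamardGate * hadamardGate = 1 := by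
    ext i j
    fin_cases i <;> fin_cases j <;>
      simp [hadamardGate, Matrix.mul_apply] <;>
      linear_combination 2 * inv_sqrt_two_sq
  exact ⟨by rw [star_hadamardGate, h], by rw [star_hadamardGate, h]⟩

lemma hadamardGate_conj_ketbra_zero :
    hadamardGate * ketbra 0 * star hadamardGate = blochMatrix ![1, 0, 0] := by
  have hk : ketbra 0 = !![1, 0; 0, 0] := by
    ext i j; fin_cases i <;> fin_cases j <;> simp [ketbra]
  rw [star_hadamardGate, hk]
  ext i j
  fin_cases i <;> fin_cases j <;>
    simp [hadamardGate, blochMatrix_eq, Matrix.mul_apply] <;>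
    linear_combination inv_sqrt_two_sq

lemma mem_discordDistances_bellDiagonal {E : Fin 3 → ℝ} (hE : |E 0| ≤ 1) :
    (E 1 ^ 2 + E 2 ^ 2) / 4 ∈ discordDistances (bellDiagonal E) := by
  have hstate : ∀ s : ℝ, |s| ≤ 1 →
      (blochMatrix ![s, 0, 0]).PosSemidef ∧ (blochMatrix ![s, 0, 0]).trace = 1 := fun s hs =>
    ⟨blochMatrix_posSemidef (by simpa [Fin.sum_univ_three] using sq_le_one_iff_abs_le_one s |>.2 hs),
      trace_blochMatrix _⟩
  have hU := hadamardGate_mem_unitaryGroup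
  refine ⟨![1 / 2, 1 / 2], ![blochMatrix ![E 0, 0, 0], blochMatrix ![-E 0, 0, 0]], hadamardGate,
    hU, fun k => by fin_cases k <;> norm_num, by norm_num [Fin.sum_univ_two], ?_, ?_⟩
  · intro k
    fin_cases k
    · exact hstate _ hE
    · exact hstate _ (by rwa [abs_neg])
  · rw [Fin.sum_univ_two, conj_ketbra_one hU, hadamardGate_conj_ketbra_zero, one_sub_blochMatrix]
    simp only [Matrix.cons_val_zero, Matrix.cons_val_one]
    rw [re_trace_sq_bellDiagonal_sub E _ _ _ (by norm_num)]
    simp [Fin.sum_univ_three]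
    ring

lemma sInf_discordDistances_bellDiagonal {E : Fin 3 → ℝ} (h01 : E 1 ^ 2 ≤ E 0 ^ 2)
    (h02 : E 2 ^ 2 ≤ E 0 ^ 2) (hE : |E 0| ≤ 1) :
    sInf (discordDistances (bellDiagonal E)) = (E 1 ^ 2 + E 2 ^ 2) / 4 :=
  IsLeast.csInf_eq ⟨mem_discordDistances_bellDiagonal hE,
    fun _ hd => le_of_mem_discordDistances_bellDiagonal h01 h02 hd⟩

/-- For Bell diagonal states `ρ = ¼(1⊗1 + Σ_l E_l σ_l⊗σ_l)` with
`E₁² ≥ E₂² ≥ E₃²`, the normalized geometric discord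
`D²_{a|b}(ρ) = 2·min_σ Tr(ρ−σ)²` (minimum over zero-discord states `σ`) equals
`½(E₂² + E₃²)`; in particular for Werner states (all `|E_l| = q` with `q ≥ 0`),
`D_{a|b} = q`. -/
theorem stmt_17 (E : Fin 3 → ℝ) (h01 : (E 1) ^ 2 ≤ (E 0) ^ 2) (h12 : (E 2) ^ 2 ≤ (E 1) ^ 2)
    (hphys : ∀ l, |E l| ≤ 1)
    (ρ : Matrix (Fin 2 × Fin 2) (Fin 2 × Fin 2) ℂ)
    (hρ : ρ = (1/4 : ℂ) •
      ((1 : Matrix (Fin 2 × Fin 2) (Fin 2 × Fin 2) ℂ)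
        + ∑ l, (E l : ℂ) • (pauli l ⊗ₖ pauli l))) :
    2 * sInf (discordDistances ρ) = ((E 1) ^ 2 + (E 2) ^ 2) / 2 ∧
    ∀ q : ℝ, 0 ≤ q → (∀ l, |E l| = q) →
      Real.sqrt (2 * sInf (discordDistances ρ)) = q := by
  have hsInf : sInf (discordDistances ρ) = (E 1 ^ 2 + E 2 ^ 2) / 4 := by
    rw [hρ]
    exact sInf_discordDistances_bellDiagonal h01 (h12.trans h01) (hphys 0)
  refine ⟨by rw [hsInf]; ring, fun q hq hE => ?_⟩
  rw [hsInf, ← sq_abs (E 1), ← sq_abs (E 2), hE, hE,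
    show 2 * ((q ^ 2 + q ^ 2) / 4) = q ^ 2 by ring, Real.sqrt_sq hq]

end
end
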